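/- For every q ∈ (2,4), α > 0 and μ > 0, the reduced energy Ẽ_{q,α} is bounded from below on X_μ: there exists C ≥ 0 such that Ẽ_{q,α}(u) ≥ −C for every u ∈ X_μ; in particular 𝓔̃_{q,α}(μ) > −∞. -/

import Mathlib

open MeasureTheory Set

/-- The weight `g(x) = 4` for `x ≤ 1` and `g(x) = 4(2x−1)` for `x > 1`. -/
noncomputable def g (x : ℝ) : ℝ := if x ≤ 1 then 4 else 4 * (2 * x - 1)

/-- `u` belongs to the weighted Sobolev space `H¹(ℝ⁺, g dx)` with derivative
`u'`: it is locally absolutely continuous on `[0,∞)` (primitive of `u'`) and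
both `u² g` and `u'² g` are integrable on `(0,∞)`. -/
def InH1g (u u' : ℝ → ℝ) : Prop :=
  IntegrableOn (fun x => (u x) ^ 2 * g x) (Ioi 0) ∧
    IntegrableOn (fun x => (u' x) ^ 2 * g x) (Ioi 0) ∧
    ∀ a b : ℝ, 0 ≤ a → 0 ≤ b → u b - u a = ∫ x in a..b, u' x

/-- The weighted mass `∫₀^∞ u² g dx`. -/
noncomputable def massg (u : ℝ → ℝ) : ℝ := ∫ x in Ioi (0 : ℝ), (u x) ^ 2 * g x

/-- The reduced energy `Ẽ_{q,α}(u) = (1/2)∫₀^∞ u'² g dx − (α/q)|u(0)|^q`. -/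
noncomputable def energyg (q α : ℝ) (u u' : ℝ → ℝ) : ℝ :=
  (1 / 2) * (∫ x in Ioi (0 : ℝ), (u' x) ^ 2 * g x) - (α / q) * |u 0| ^ q

/-- The set of reduced energies over `X_μ = {u : 0 < ∫ u² g ≤ μ}`;
its infimum is `𝓔̃_{q,α}(μ)`. -/
def levelSetg (q α μ : ℝ) : Set ℝ :=
  {E | ∃ u u' : ℝ → ℝ, InH1g u u' ∧ 0 < massg u ∧ massg u ≤ μ ∧
    E = energyg q α u u'}

/-! Averaging the fundamental theorem of calculus over `(0, δ]` and applying Cauchy–Schwarz gives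
`u(0)² ≤ 2‖u‖²/δ + 2δ‖u'‖²` in `L²(0, ∞)`, and `g ≥ 4` bounds these norms by the weighted ones.
The choice `δ = (1 + T)^(-1/2)`, with `T = ∫ u'² g`, yields `|u(0)|^q ≲ (1 + T)^(q/4)`; as
`q/4 < 1`, this is absorbed by the kinetic term `T/2` up to a constant. -/

theorem sq_integral_le_measureReal_mul_integral_sq {α : Type*} [MeasurableSpace α]
    {μ : Measure α} [IsFiniteMeasure μ] {f : α → ℝ} (hf₀ : 0 ≤ᵐ[μ] f) (hf : MemLp f 2 μ) :
    (∫ x, f x ∂μ) ^ 2 ≤ μ.real univ * ∫ x, f x ^ 2 ∂μ := by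
  have h := integral_mul_le_Lp_mul_Lq_of_nonneg Real.HolderConjugate.two_two hf₀
    (Filter.Eventually.of_forall fun _ => zero_le_one) (by simpa using hf)
    (memLp_const (1 : ℝ))
  simp only [Real.rpow_two, one_pow, mul_one, integral_const, smul_eq_mul] at h
  have hI : 0 ≤ ∫ x, f x ^ 2 ∂μ := integral_nonneg fun x => sq_nonneg _
  calc (∫ x, f x ∂μ) ^ 2
        ≤ ((∫ x, f x ^ 2 ∂μ) ^ (1 / 2 : ℝ) * μ.real univ ^ (1 / 2 : ℝ)) ^ 2 :=
        pow_le_pow_left₀ (integral_nonneg_of_ae hf₀) h 2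
    _ = μ.real univ * ∫ x, f x ^ 2 ∂μ := by
        rw [mul_pow, ← Real.sqrt_eq_rpow, ← Real.sqrt_eq_rpow, Real.sq_sqrt hI,
          Real.sq_sqrt measureReal_nonneg, mul_comm]

theorem exists_mul_rpow_le_mul_add {K r ε : ℝ} (hK : 0 ≤ K) (hr₀ : 0 < r) (hr₁ : r < 1)
    (hε : 0 < ε) : ∃ C, 0 ≤ C ∧ ∀ x, 0 ≤ x → K * x ^ r ≤ ε * x + C := by
  set M := (K * (r / ε) ^ r) ^ (1 - r)⁻¹
  have hM : 0 ≤ M := by positivity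
  refine ⟨(1 - r) * M, by nlinarith, fun x hx => ?_⟩
  have hMr : M ^ (1 - r) = K * (r / ε) ^ r := Real.rpow_inv_rpow (by positivity) (by linarith)
  have hinv : r / ε * (ε / r) = 1 := by field_simp
  calc K * x ^ r = M ^ (1 - r) * (ε / r * x) ^ r := by
        rw [hMr, Real.mul_rpow (by positivity) hx, ← mul_assoc, mul_assoc K,
          ← Real.mul_rpow (by positivity) (by positivity), hinv, Real.one_rpow, mul_one]
    _ ≤ (1 - r) * M + r * (ε / r * x) :=
      Real.geom_mean_le_arith_mean2_weighted (by linarith) hr₀.le hM (by positivity) (by ring)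
    _ = ε * x + (1 - r) * M := by field_simp; ring

section Trace

variable {u u' : ℝ → ℝ}

theorem mul_abs_apply_zero_le_integral (hu : ∀ x, 0 ≤ x → u x - u 0 = ∫ y in 0..x, u' y)
    {δ : ℝ} (hδ : 0 ≤ δ) (hu_int : IntegrableOn (fun x => |u x|) (Ioc 0 δ))
    (hu'_int : IntegrableOn (fun x => |u' x|) (Ioc 0 δ)) :
    δ * |u 0| ≤ (∫ x in Ioc 0 δ, |u x|) + δ * ∫ x in Ioc 0 δ, |u' x| := by
  set V := ∫ x in Ioc 0 δ, |u' x|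
  have hpt : ∀ x ∈ Ioc 0 δ, |u 0| ≤ |u x| + V := fun x hx => by
    have hV : |u x - u 0| ≤ V := by
      rw [hu x hx.1.le, intervalIntegral.integral_of_le hx.1.le]
      refine abs_integral_le_integral_abs.trans ?_
      exact setIntegral_mono_set hu'_int (Filter.Eventually.of_forall fun y => abs_nonneg _)
        (Ioc_subset_Ioc_right hx.2).eventuallyLE
    linarith [abs_sub_abs_le_abs_sub (u 0) (u x), abs_sub_comm (u 0) (u x)]
  have hconst : ∀ c : ℝ, IntegrableOn (fun _ => c) (Ioc 0 δ) := fun c =>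
    integrableOn_const measure_Ioc_lt_top.ne
  have h := setIntegral_mono_on (hconst _) (hu_int.add (hconst V)) measurableSet_Ioc hpt
  simp only [Pi.add_apply] at h
  rwa [integral_add hu_int (hconst V), setIntegral_const, setIntegral_const,
    Real.volume_real_Ioc_of_le hδ, sub_zero, smul_eq_mul, smul_eq_mul] at h

/- `u'` is only controlled through `u'² g`, so it need not be measurable: only `|u'|` is used. -/
theorem sq_apply_zero_le (hu : ∀ x, 0 ≤ x → u x - u 0 = ∫ y in 0..x, u' y)
    (hu_L2 : MemLp (fun x => |u x|) 2 (volume.restrict (Ioi 0)))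
    (hu'_L2 : MemLp (fun x => |u' x|) 2 (volume.restrict (Ioi 0))) {δ : ℝ} (hδ : 0 < δ) :
    u 0 ^ 2 ≤ 2 * (∫ x in Ioi 0, u x ^ 2) / δ + 2 * δ * ∫ x in Ioi 0, u' x ^ 2 := by
  have local_L2 : ∀ v : ℝ → ℝ, MemLp (fun x => |v x|) 2 (volume.restrict (Ioi 0)) →
      IntegrableOn (fun x => |v x|) (Ioc 0 δ) ∧
        (∫ x in Ioc 0 δ, |v x|) ^ 2 ≤ δ * ∫ x in Ioi 0, v x ^ 2 := fun v hv => by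
    have hv' : MemLp (fun x => |v x|) 2 (volume.restrict (Ioc 0 δ)) :=
      hv.mono_measure (Measure.restrict_mono Ioc_subset_Ioi_self le_rfl)
    have hsq : Integrable (fun x => v x ^ 2) (volume.restrict (Ioi 0)) := by
      simpa using hv.integrable_sq
    have hCS := sq_integral_le_measureReal_mul_integral_sq
      (Filter.Eventually.of_forall fun x => abs_nonneg (v x)) hv'
    simp only [sq_abs, measureReal_restrict_apply_univ, Real.volume_real_Ioc_of_le hδ.le,
      sub_zero] at hCS
    refine ⟨hv'.integrable one_le_two, hCS.trans (mul_le_mul_of_nonneg_left ?_ hδ.le)⟩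
    exact setIntegral_mono_set hsq (Filter.Eventually.of_forall fun x => sq_nonneg _)
      Ioc_subset_Ioi_self.eventuallyLE
  obtain ⟨hu_int, hX⟩ := local_L2 u hu_L2
  obtain ⟨hu'_int, hY⟩ := local_L2 u' hu'_L2
  have havg := mul_abs_apply_zero_le_integral hu hδ.le hu_int hu'_int
  set X := ∫ x in Ioc 0 δ, |u x|
  set Y := ∫ x in Ioc 0 δ, |u' x|
  have hX₀ : 0 ≤ X := setIntegral_nonneg measurableSet_Ioc fun x _ => abs_nonneg _
  have hY₀ : 0 ≤ Y := setIntegral_nonneg measurableSet_Ioc fun x _ => abs_nonneg _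
  have hsq : (δ * |u 0|) ^ 2 ≤ 2 * X ^ 2 + 2 * δ ^ 2 * Y ^ 2 := by
    nlinarith [sq_nonneg (X - δ * Y), mul_nonneg hδ.le (abs_nonneg (u 0))]
  calc u 0 ^ 2 = (δ * |u 0|) ^ 2 / δ ^ 2 := by field_simp; rw [sq_abs]
    _ ≤ (2 * X ^ 2 + 2 * δ ^ 2 * Y ^ 2) / δ ^ 2 := by gcongr
    _ ≤ (2 * (δ * ∫ x in Ioi 0, u x ^ 2) + 2 * δ ^ 2 * (δ * ∫ x in Ioi 0, u' x ^ 2)) /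
          δ ^ 2 := by gcongr
    _ = 2 * (∫ x in Ioi 0, u x ^ 2) / δ + 2 * δ * ∫ x in Ioi 0, u' x ^ 2 := by
        field_simp

end Trace

lemma four_le_g (x : ℝ) : 4 ≤ g x := by
  unfold g
  split_ifs <;> linarith

lemma measurable_g : Measurable g :=
  Measurable.ite measurableSet_Iic measurable_const (by fun_prop)

lemma setIntegral_sq_mul_g_nonneg (v : ℝ → ℝ) : 0 ≤ ∫ x in Ioi 0, v x ^ 2 * g x :=
  setIntegral_nonneg measurableSet_Ioi fun x _ =>
    mul_nonneg (sq_nonneg _) (zero_le_four.trans (four_le_g x))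

section Weighted

variable {v : ℝ → ℝ}

lemma memLp_abs_of_integrableOn_sq_mul_g
    (hv : IntegrableOn (fun x => v x ^ 2 * g x) (Ioi 0)) :
    MemLp (fun x => |v x|) 2 (volume.restrict (Ioi 0)) := by
  have hmeas : AEStronglyMeasurable (fun x => v x ^ 2) (volume.restrict (Ioi 0)) := by
    refine (hv.aestronglyMeasurable.div₀ measurable_g.aestronglyMeasurable).congr
      (Filter.Eventually.of_forall fun x => ?_)
    have := four_le_g x
    simp only [Pi.div_apply]
    field_simp
  have habs : AEStronglyMeasurable (fun x => |v x|) (volume.restrict (Ioi 0)) :=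
    (Real.continuous_sqrt.comp_aestronglyMeasurable hmeas).congr
      (Filter.Eventually.of_forall fun x => Real.sqrt_sq_eq_abs (v x))
  refine (memLp_two_iff_integrable_sq habs).2 ?_
  simp only [sq_abs]
  refine hv.mono' hmeas (Filter.Eventually.of_forall fun x => ?_)
  rw [Real.norm_of_nonneg (sq_nonneg _)]
  nlinarith [four_le_g x, sq_nonneg (v x)]

lemma integral_sq_le_of_integrableOn_sq_mul_g
    (hv : IntegrableOn (fun x => v x ^ 2 * g x) (Ioi 0)) :
    ∫ x in Ioi 0, v x ^ 2 ≤ (∫ x in Ioi 0, v x ^ 2 * g x) / 4 := by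
  rw [le_div_iff₀ four_pos, ← integral_mul_const]
  refine integral_mono_of_nonneg (Filter.Eventually.of_forall fun x => by positivity) hv
    (Filter.Eventually.of_forall fun x => ?_)
  exact mul_le_mul_of_nonneg_left (four_le_g x) (sq_nonneg _)

end Weighted

lemma sq_apply_zero_le_of_InH1g {u u' : ℝ → ℝ} (hu : InH1g u u') :
    u 0 ^ 2 ≤ (massg u + 1) / 2 * √(1 + ∫ x in Ioi 0, u' x ^ 2 * g x) := by
  obtain ⟨hu₂, hu'₂, hFTC⟩ := hu
  set T := ∫ x in Ioi 0, u' x ^ 2 * g x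
  have hT : 0 ≤ T := setIntegral_sq_mul_g_nonneg u'
  set s := √(1 + T)
  have hs : 1 ≤ s := Real.one_le_sqrt.2 (by linarith)
  have hs₂ : s ^ 2 = 1 + T := Real.sq_sqrt (by linarith)
  have h := sq_apply_zero_le (fun x hx => hFTC 0 x le_rfl hx)
    (memLp_abs_of_integrableOn_sq_mul_g hu₂) (memLp_abs_of_integrableOn_sq_mul_g hu'₂)
    (inv_pos.2 (zero_lt_one.trans_le hs))
  have ha := integral_sq_le_of_integrableOn_sq_mul_g hu₂
  have hb := integral_sq_le_of_integrableOn_sq_mul_g hu'₂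
  rw [div_inv_eq_mul] at h
  calc u 0 ^ 2 ≤ 2 * (massg u / 4) * s + 2 * s⁻¹ * (T / 4) := by
        refine h.trans ?_
        gcongr
        exact ha
    _ ≤ (massg u + 1) / 2 * s := by
        field_simp
        nlinarith

lemma abs_apply_zero_rpow_le_of_InH1g {u u' : ℝ → ℝ} (hu : InH1g u u') {μ q : ℝ}
    (hμ : massg u ≤ μ) (hq : 0 ≤ q) :
    |u 0| ^ q ≤ ((μ + 1) / 2) ^ (q / 2) * (1 + ∫ x in Ioi 0, u' x ^ 2 * g x) ^ (q / 4) := by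
  have hμ₀ : 0 ≤ μ := (setIntegral_sq_mul_g_nonneg u).trans hμ
  have hT := setIntegral_sq_mul_g_nonneg u'
  calc |u 0| ^ q = (u 0 ^ 2) ^ (q / 2) := by
        rw [← sq_abs, ← Real.rpow_natCast, ← Real.rpow_mul (abs_nonneg _)]
        ring_nf
    _ ≤ ((μ + 1) / 2 * √(1 + ∫ x in Ioi 0, u' x ^ 2 * g x)) ^ (q / 2) := by
        refine Real.rpow_le_rpow (sq_nonneg _) ((sq_apply_zero_le_of_InH1g hu).trans ?_)
          (by positivity)
        gcongr
    _ = ((μ + 1) / 2) ^ (q / 2) * (1 + ∫ x in Ioi 0, u' x ^ 2 * g x) ^ (q / 4) := by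
        rw [Real.mul_rpow (by positivity) (by positivity), Real.sqrt_eq_rpow,
          ← Real.rpow_mul (by positivity)]
        ring_nf

/-- For every `q ∈ (2,4)`, `α > 0` and `μ > 0`, the reduced energy is bounded
below on `X_μ`: `𝓔̃_{q,α}(μ) > -∞`. -/
theorem stmt11 (q α μ : ℝ) (hq : 2 < q) (hq' : q < 4) (hα : 0 < α) (hμ : 0 < μ) :
    ∃ C : ℝ, 0 ≤ C ∧ ∀ u u' : ℝ → ℝ, InH1g u u' → 0 < massg u → massg u ≤ μ →
      -C ≤ energyg q α u u' := by
  obtain ⟨C, hC₀, hC⟩ := exists_mul_rpow_le_mul_add (K := α / q * ((μ + 1) / 2) ^ (q / 2))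
    (r := q / 4) (ε := 1 / 2) (by positivity) (by positivity) (by linarith) one_half_pos
  refine ⟨C + 1 / 2, by positivity, fun u u' hu _ hmass => ?_⟩
  have hT := setIntegral_sq_mul_g_nonneg u'
  have htrace := abs_apply_zero_rpow_le_of_InH1g hu hmass (by linarith : 0 ≤ q)
  have hbound := hC _ (by linarith : 0 ≤ 1 + ∫ x in Ioi 0, u' x ^ 2 * g x)
  rw [energyg]
  nlinarith [mul_le_mul_of_nonneg_left htrace (by positivity : 0 ≤ α / q)]
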